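/- Let p and p' be open-minded Borel probability measures on the Cantor space ℕ → Bool such that p is absolutely continuous with respect to p' and p' is absolutely continuous with respect to p. Then both p-almost surely and p'-almost surely, sup over all Borel sets A of |p(A | Γ_{ω|n}) − p'(A | Γ_{ω|n})| tends to 0 as n → ∞. -/

import Mathlib

open MeasureTheory ProbabilityTheory Filter

/-- The cylinder set of infinite binary sequences whose initial segment is `x`. -/
def cylinder (x : List Bool) : Set (ℕ → Bool) :=
  {ω | ∀ i : Fin x.length, ω i = x.get i}

/-- The initial segment of length `n` of an infinite binary sequence `ω`. -/
def seg (ω : ℕ → Bool) (n : ℕ) : List Bool :=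
  List.ofFn (fun i : Fin n => ω i)

/-!
Let `f = dp/dp'` and let `r = p(Γ) / p'(Γ)`, the `p'`-average of `f` over a cylinder `Γ`. Then
`p(A | Γ) - p'(A | Γ) = p(Γ)⁻¹ ∫_{Γ ∩ A} (f - r) dp'`, so uniformly in `A` the difference is at
most `2 r⁻¹ ⨍_Γ |f - c| dp'` for every constant `c`. Conditioning on the first `n` bits is
averaging over `Γ_{ω|n}`, so Lévy's upward theorem gives, `p'`-almost surely, `⨍ f → f ω` and
(applied to `|f - q|` for all rational `q`) `⨍ |f - f ω| → 0` along these cylinders. As `p' ≪ p`,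
`f > 0` `p'`-almost surely, hence the bound tends to `0`; `p ≪ p'` transfers this to `p`.
-/

section FiniteValued

variable {α β : Type*} [MeasurableSpace α] [MeasurableSpace β] [MeasurableSingletonClass β]
  {μ : Measure α} {Y : α → β}

lemma setIntegral_preimage_eq_sum (hY : Measurable Y) {f : α → ℝ} (hf : Integrable f μ)
    {B : Set β} (hB : B.Finite) :
    ∫ x in Y ⁻¹' B, f x ∂μ = ∑ b ∈ hB.toFinset, ∫ x in Y ⁻¹' {b}, f x ∂μ := by
  have hunion : Y ⁻¹' B = ⋃ b ∈ hB.toFinset, Y ⁻¹' {b} := by ext; simp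
  rw [hunion, integral_biUnion_finset _ (fun b _ => hY (measurableSet_singleton b))
    (fun b _ b' _ hne => (Set.disjoint_singleton.mpr hne).preimage Y) fun _ _ => hf.integrableOn]

lemma condExp_comap_ae_eq_setAverage [Finite β] [IsFiniteMeasure μ] (hY : Measurable Y)
    {f : α → ℝ} (hf : Integrable f μ) :
    μ[f | MeasurableSpace.comap Y ‹_›] =ᵐ[μ] fun x => ⨍ y in Y ⁻¹' {Y x}, f y ∂μ := by
  set g : β → ℝ := fun b => ⨍ y in Y ⁻¹' {b}, f y ∂μ
  have hg : Integrable (g ∘ Y) μ :=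
    (integrable_map_measure (measurable_of_finite g).aestronglyMeasurable hY.aemeasurable).mp
      Integrable.of_finite
  have hfiber : ∀ b, ∫ x in Y ⁻¹' {b}, g (Y x) ∂μ = ∫ x in Y ⁻¹' {b}, f x ∂μ := fun b => by
    rw [setIntegral_congr_fun (hY (measurableSet_singleton b)) fun x (hx : Y x = b) => by rw [hx],
      setIntegral_const, measure_smul_setAverage _ (measure_ne_top μ _)]
  refine (ae_eq_condExp_of_forall_setIntegral_eq hY.comap_le hf (fun _ _ _ => hg.integrableOn)
    ?_ ((measurable_of_finite g).comp (comap_measurable Y)).aestronglyMeasurable).symm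
  rintro _ ⟨B, -, rfl⟩ -
  rw [setIntegral_preimage_eq_sum hY hg B.toFinite, setIntegral_preimage_eq_sum hY hf B.toFinite]
  exact Finset.sum_congr rfl fun b _ => hfiber b

end FiniteValued

section Average

variable {α : Type*} [MeasurableSpace α] {μ : Measure α} [IsFiniteMeasure μ] {f : α → ℝ}

lemma integral_abs_sub_le_add (hf : Integrable f μ) (a b : ℝ) :
    ∫ x, |f x - a| ∂μ ≤ ∫ x, |f x - b| ∂μ + μ.real Set.univ * |b - a| := by
  have hfb : Integrable (fun x => |f x - b|) μ := (hf.sub (integrable_const b)).abs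
  calc ∫ x, |f x - a| ∂μ ≤ ∫ x, (|f x - b| + |b - a|) ∂μ :=
        integral_mono (hf.sub (integrable_const a)).abs (hfb.add (integrable_const _))
          fun x => abs_sub_le _ b _
    _ = ∫ x, |f x - b| ∂μ + μ.real Set.univ * |b - a| := by
        rw [integral_add hfb (integrable_const _), integral_const, smul_eq_mul]

lemma average_abs_sub_le (hf : Integrable f μ) (a b : ℝ) :
    ⨍ x, |f x - a| ∂μ ≤ ⨍ x, |f x - b| ∂μ + |b - a| := by
  simp only [average_eq, smul_eq_mul]
  calc (μ.real Set.univ)⁻¹ * ∫ x, |f x - a| ∂μ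
      ≤ (μ.real Set.univ)⁻¹ * (∫ x, |f x - b| ∂μ + μ.real Set.univ * |b - a|) := by
        gcongr
        exact integral_abs_sub_le_add hf a b
    _ ≤ (μ.real Set.univ)⁻¹ * ∫ x, |f x - b| ∂μ + |b - a| := by
        rw [mul_add, ← mul_assoc]
        gcongr
        exact mul_le_of_le_one_left (abs_nonneg _) inv_mul_le_one

lemma integral_abs_sub_average_le (hf : Integrable f μ) (c : ℝ) :
    ∫ x, |f x - ⨍ y, f y ∂μ| ∂μ ≤ 2 * ∫ x, |f x - c| ∂μ := by
  have hconst : μ.real Set.univ * |c - ⨍ y, f y ∂μ| ≤ ∫ x, |f x - c| ∂μ :=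
    calc μ.real Set.univ * |c - ⨍ y, f y ∂μ| = |∫ x, (c - f x) ∂μ| := by
          rw [integral_sub (integrable_const c) hf, integral_const, ← measure_smul_average,
            smul_eq_mul, smul_eq_mul, ← mul_sub, abs_mul, abs_of_nonneg measureReal_nonneg]
      _ ≤ ∫ x, |f x - c| ∂μ := by
          simpa only [Real.norm_eq_abs, abs_sub_comm] using
            norm_integral_le_integral_norm (μ := μ) fun x => c - f x
  linarith [integral_abs_sub_le_add hf (⨍ y, f y ∂μ) c]

end Average

lemma abs_cond_sub_cond_le {α : Type*} [MeasurableSpace α] {p p' : Measure α}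
    [IsFiniteMeasure p] [IsFiniteMeasure p'] (hac : p ≪ p') {Γ : Set α} (hΓ : MeasurableSet Γ)
    (hr : 0 < ⨍ x in Γ, (p.rnDeriv p' x).toReal ∂p') (A : Set α) (c : ℝ) :
    |((p[|Γ]) A).toReal - ((p'[|Γ]) A).toReal| ≤
      2 * (⨍ x in Γ, (p.rnDeriv p' x).toReal ∂p')⁻¹ *
        ⨍ x in Γ, |(p.rnDeriv p' x).toReal - c| ∂p' := by
  set f : α → ℝ := fun x => (p.rnDeriv p' x).toReal
  set r := ⨍ x in Γ, f x ∂p'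
  have hf : Integrable f p' := Measure.integrable_toReal_rnDeriv
  have hp'Γ : p'.real Γ ≠ 0 := fun h0 =>
    hr.ne' (by simp only [r, setAverage_eq, h0, inv_zero, zero_smul])
  have hpΓ : p.real Γ = p'.real Γ * r := by
    rw [← Measure.setIntegral_toReal_rnDeriv hac, ← measure_smul_setAverage _ (measure_ne_top _ _),
      smul_eq_mul]
  have hdiff : ((p[|Γ]) A).toReal - ((p'[|Γ]) A).toReal
      = (p.real Γ)⁻¹ * ∫ x in Γ ∩ A, (f x - r) ∂p' := by
    rw [cond_apply hΓ, cond_apply hΓ, ENNReal.toReal_mul, ENNReal.toReal_mul, ENNReal.toReal_inv,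
      ENNReal.toReal_inv, integral_sub hf.integrableOn (integrable_const r),
      Measure.setIntegral_toReal_rnDeriv hac, setIntegral_const, smul_eq_mul]
    simp only [measureReal_def] at hpΓ hp'Γ ⊢
    rw [hpΓ]
    field_simp [hr.ne']
  have hlocal : |∫ x in Γ ∩ A, (f x - r) ∂p'| ≤ ∫ x in Γ, |f x - r| ∂p' :=
    calc |∫ x in Γ ∩ A, (f x - r) ∂p'| ≤ ∫ x in Γ ∩ A, |f x - r| ∂p' :=
          abs_integral_le_integral_abs
      _ ≤ ∫ x in Γ, |f x - r| ∂p' :=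
          setIntegral_mono_set (hf.sub (integrable_const r)).abs.integrableOn
            (Eventually.of_forall fun x => abs_nonneg _) Set.inter_subset_left.eventuallyLE
  calc |((p[|Γ]) A).toReal - ((p'[|Γ]) A).toReal|
      ≤ (p.real Γ)⁻¹ * (2 * ∫ x in Γ, |f x - c| ∂p') := by
        rw [hdiff, abs_mul, abs_inv, abs_of_nonneg measureReal_nonneg]
        gcongr
        exact hlocal.trans (integral_abs_sub_average_le hf.integrableOn c)
    _ = 2 * r⁻¹ * ⨍ x in Γ, |f x - c| ∂p' := by
        rw [setAverage_eq, smul_eq_mul, hpΓ]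
        field_simp

def firstBits (n : ℕ) (ω : ℕ → Bool) : Fin n → Bool := fun i => ω i

lemma measurable_firstBits (n : ℕ) : Measurable (firstBits n) :=
  measurable_pi_lambda _ fun _ => measurable_pi_apply _

lemma cylinder_seg (ω : ℕ → Bool) (n : ℕ) :
    cylinder (seg ω n) = firstBits n ⁻¹' {firstBits n ω} := by
  ext η
  simp only [_root_.cylinder, seg, firstBits, List.get_ofFn, Fin.val_cast,
    Set.mem_preimage, Set.mem_singleton_iff, funext_iff]
  exact ⟨fun h i => h (Fin.cast List.length_ofFn.symm i),
    fun h i => h (Fin.cast List.length_ofFn i)⟩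

lemma measurableSet_cylinder_seg (ω : ℕ → Bool) (n : ℕ) : MeasurableSet (cylinder (seg ω n)) :=
  cylinder_seg ω n ▸ measurable_firstBits n (measurableSet_singleton _)

def cylinderFiltration : Filtration ℕ (MeasurableSpace.pi : MeasurableSpace (ℕ → Bool)) where
  seq n := MeasurableSpace.comap (firstBits n) inferInstance
  mono' n m hnm := by
    have hcomp : firstBits n = (fun v i => v (Fin.castLE hnm i)) ∘ firstBits m := rfl
    simp only
    rw [hcomp, ← MeasurableSpace.comap_comp]
    exact MeasurableSpace.comap_mono (measurable_of_finite _).comap_le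
  le' n := (measurable_firstBits n).comap_le

lemma iSup_cylinderFiltration : ⨆ n, cylinderFiltration n = MeasurableSpace.pi := by
  refine le_antisymm (iSup_le cylinderFiltration.le) (iSup_le fun i => Measurable.comap_le ?_)
  exact ((measurable_of_finite fun v : Fin (i + 1) → Bool => v (Fin.last i)).comp
    (comap_measurable (firstBits (i + 1)))).mono
    (le_iSup (fun n => (cylinderFiltration n : MeasurableSpace (ℕ → Bool))) (i + 1)) le_rfl

section Cantor

variable {μ : Measure (ℕ → Bool)} [IsFiniteMeasure μ] {f : (ℕ → Bool) → ℝ}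

lemma ae_tendsto_setAverage_cylinder_seg (hf : Integrable f μ) :
    ∀ᵐ ω ∂μ, Tendsto (fun n => ⨍ x in cylinder (seg ω n), f x ∂μ) atTop (nhds (f ω)) := by
  have hlim : μ[f | ⨆ n, cylinderFiltration n] =ᵐ[μ] f := by
    rw [iSup_cylinderFiltration]
    exact condExp_of_aestronglyMeasurable' le_rfl hf.aestronglyMeasurable hf
  have hstep : ∀ᵐ ω ∂μ, ∀ n,
      μ[f | cylinderFiltration n] ω = ⨍ x in cylinder (seg ω n), f x ∂μ :=
    ae_all_iff.mpr fun n => by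
      simp_rw [cylinder_seg]
      exact condExp_comap_ae_eq_setAverage (measurable_firstBits n) hf
  filter_upwards [tendsto_ae_condExp f, hlim, hstep] with ω hlevy hω hstepω
  rw [hω] at hlevy
  exact hlevy.congr hstepω

lemma ae_tendsto_setAverage_abs_sub_cylinder_seg (hf : Integrable f μ) :
    ∀ᵐ ω ∂μ, Tendsto (fun n => ⨍ x in cylinder (seg ω n), |f x - f ω| ∂μ) atTop (nhds 0) := by
  have hrat : ∀ᵐ ω ∂μ, ∀ q : ℚ, Tendsto (fun n => ⨍ x in cylinder (seg ω n), |f x - q| ∂μ)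
      atTop (nhds |f ω - q|) :=
    ae_all_iff.mpr fun q => ae_tendsto_setAverage_cylinder_seg (hf.sub (integrable_const _)).abs
  filter_upwards [hrat] with ω hω
  rw [tendsto_order]
  refine ⟨fun ε hε => Eventually.of_forall fun n => ?_, fun ε hε => ?_⟩
  · exact hε.trans_le (integral_nonneg fun _ => abs_nonneg _)
  · obtain ⟨q, hq⟩ := exists_rat_near (f ω) (show 0 < ε / 3 by positivity)
    filter_upwards [(hω q).eventually_lt_const (show |f ω - q| < ε - ε / 3 by linarith)] with n hn
    have := average_abs_sub_le (μ := μ.restrict (cylinder (seg ω n))) hf.integrableOn (f ω) q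
    rw [abs_sub_comm] at hq
    linarith

end Cantor

theorem ae_tendsto_iSup_abs_cond_sub_cond {p p' : Measure (ℕ → Bool)} [IsFiniteMeasure p]
    [IsFiniteMeasure p'] (hac : p ≪ p') (hac' : p' ≪ p) :
    ∀ᵐ ω ∂p', Tendsto
      (fun n : ℕ => ⨆ (A : Set (ℕ → Bool)) (_ : MeasurableSet A),
        |((p[|cylinder (seg ω n)]) A).toReal - ((p'[|cylinder (seg ω n)]) A).toReal|)
      atTop (nhds 0) := by
  set f : (ℕ → Bool) → ℝ := fun x => (p.rnDeriv p' x).toReal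
  have hf : Integrable f p' := Measure.integrable_toReal_rnDeriv
  have hfpos : ∀ᵐ ω ∂p', 0 < f ω := by
    have := Measure.haveLebesgueDecomposition_of_finiteMeasure (μ := p) (ν := p')
    filter_upwards [hac'.ae_le (Measure.rnDeriv_pos hac), Measure.rnDeriv_lt_top p p']
      with ω h0 htop
    exact ENNReal.toReal_pos h0.ne' htop.ne
  filter_upwards [ae_tendsto_setAverage_cylinder_seg hf,
    ae_tendsto_setAverage_abs_sub_cylinder_seg hf, hfpos] with ω hmean hdev hω
  have hbound : ∀ᶠ n in atTop, ⨆ (A : Set (ℕ → Bool)) (_ : MeasurableSet A),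
      |((p[|cylinder (seg ω n)]) A).toReal - ((p'[|cylinder (seg ω n)]) A).toReal| ≤
        2 * (⨍ x in cylinder (seg ω n), f x ∂p')⁻¹ *
          ⨍ x in cylinder (seg ω n), |f x - f ω| ∂p' := by
    filter_upwards [hmean.eventually_const_lt hω] with n hn
    have hle := abs_cond_sub_cond_le hac (measurableSet_cylinder_seg ω n) hn
    exact Real.iSup_le (fun A => Real.iSup_le (fun _ => hle A (f ω))
      ((abs_nonneg _).trans (hle ∅ _))) ((abs_nonneg _).trans (hle ∅ _))
  refine squeeze_zero' (Eventually.of_forall fun n =>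
    Real.iSup_nonneg fun A => Real.iSup_nonneg fun _ => abs_nonneg _) hbound ?_
  simpa using ((hmean.inv₀ hω.ne').const_mul 2).mul hdev

theorem mutual_merging_of_opinions_general (p p' : Measure (ℕ → Bool))
    [IsProbabilityMeasure p] [IsProbabilityMeasure p']
    (hac : p ≪ p') (hac' : p' ≪ p) :
    (∀ᵐ ω ∂p, Tendsto
      (fun n : ℕ => ⨆ (A : Set (ℕ → Bool)) (_ : MeasurableSet A),
        |((p[|cylinder (seg ω n)]) A).toReal - ((p'[|cylinder (seg ω n)]) A).toReal|)
      atTop (nhds 0)) ∧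
    (∀ᵐ ω ∂p', Tendsto
      (fun n : ℕ => ⨆ (A : Set (ℕ → Bool)) (_ : MeasurableSet A),
        |((p[|cylinder (seg ω n)]) A).toReal - ((p'[|cylinder (seg ω n)]) A).toReal|)
      atTop (nhds 0)) :=
  have h := ae_tendsto_iSup_abs_cond_sub_cond hac hac'
  ⟨hac.ae_le h, h⟩

/-- If `p` and `p'` are open-minded probability measures on Cantor space that are mutually
absolutely continuous, then both `p`-almost surely and `p'`-almost surely the total
variational distance between the conditional measures given the first `n` bits tends to `0`. -/
theorem mutual_merging_of_opinions (p p' : Measure (ℕ → Bool))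
    [IsProbabilityMeasure p] [IsProbabilityMeasure p']
    (hp : ∀ x : List Bool, 0 < p (cylinder x))
    (hp' : ∀ x : List Bool, 0 < p' (cylinder x))
    (hac : p ≪ p') (hac' : p' ≪ p) :
    (∀ᵐ ω ∂p, Tendsto
      (fun n : ℕ => ⨆ (A : Set (ℕ → Bool)) (_ : MeasurableSet A),
        |((p[|cylinder (seg ω n)]) A).toReal - ((p'[|cylinder (seg ω n)]) A).toReal|)
      atTop (nhds 0)) ∧
    (∀ᵐ ω ∂p', Tendsto
      (fun n : ℕ => ⨆ (A : Set (ℕ → Bool)) (_ : MeasurableSet A),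
        |((p[|cylinder (seg ω n)]) A).toReal - ((p'[|cylinder (seg ω n)]) A).toReal|)
      atTop (nhds 0)) :=
  mutual_merging_of_opinions_general p p' hac hac'
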